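/- arXiv:2303.17911 — 6 statements merged into one kernel-verified Lean document; each statement's English description precedes it below -/
import Mathlib

section
/- Let F : ℝⁿ → ℝⁿ be continuously differentiable, let z be a zero of F, and suppose there are constants K, L, M ≥ 0 such that for all x, y: F'(x) is invertible, ‖F'(x)⁻¹‖ ≤ K, ‖F'(x) − F'(y)‖ ≤ L‖x − y‖, and ‖F'(x)‖ ≤ M. If x_{k+1} = (I + D_k)(g(x_k) − E_k F'(x_k)⁻¹F(x_k)) where g(x) = x − F'(x)⁻¹F(x) and D_k, E_k are linear maps, then ‖x_{k+1} − z‖ ≤ (1/2)LK‖x_k − z‖² + ‖E_k‖KM‖x_k − z‖ + ‖D_k‖(‖z‖ + (1/2)LK‖x_k − z‖² + ‖E_k‖KM‖x_k − z‖). -/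
/-- **Theorem 1, inequality (8).** Under the uniform bounds
`‖F'(x)⁻¹‖ ≤ K`, `‖F'(x) − F'(y)‖ ≤ L‖x − y‖`, `‖F'(x)‖ ≤ M` (with
`K, L, M ≥ 0`), a zero `z` of `F`, and the perturbed quasi-Newton iteration
`x_{k+1} = (I + D_k)(g(x_k) − E_k F'(x_k)⁻¹F(x_k))` with
`g(x) = x − F'(x)⁻¹F(x)`, one has
`‖x_{k+1} − z‖ ≤ (1/2)LK‖x_k − z‖² + ‖E_k‖KM‖x_k − z‖
  + ‖D_k‖(‖z‖ + (1/2)LK‖x_k − z‖² + ‖E_k‖KM‖x_k − z‖)`. -/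
theorem quasi_newton_error_bound {n : ℕ}
    (F : EuclideanSpace ℝ (Fin n) → EuclideanSpace ℝ (Fin n))
    (F' F'inv : EuclideanSpace ℝ (Fin n) →
      (EuclideanSpace ℝ (Fin n) →L[ℝ] EuclideanSpace ℝ (Fin n)))
    (hF : ∀ u, HasFDerivAt F (F' u) u)
    (hF'c : Continuous F')
    (hinv : ∀ u,
      (F' u).comp (F'inv u) = ContinuousLinearMap.id ℝ (EuclideanSpace ℝ (Fin n)) ∧
      (F'inv u).comp (F' u) = ContinuousLinearMap.id ℝ (EuclideanSpace ℝ (Fin n)))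
    (K L M : ℝ) (hK0 : 0 ≤ K) (hL0 : 0 ≤ L) (hM0 : 0 ≤ M)
    (hK : ∀ u, ‖F'inv u‖ ≤ K)
    (hLip : ∀ u v, ‖F' u - F' v‖ ≤ L * ‖u - v‖)
    (hM : ∀ u, ‖F' u‖ ≤ M)
    (z : EuclideanSpace ℝ (Fin n)) (hz : F z = 0)
    (x : ℕ → EuclideanSpace ℝ (Fin n))
    (Dk Ek : ℕ → (EuclideanSpace ℝ (Fin n) →L[ℝ] EuclideanSpace ℝ (Fin n)))
    (hiter : ∀ k, x (k + 1) =
      ((x k - (F'inv (x k)) (F (x k))) - (Ek k) ((F'inv (x k)) (F (x k)))) +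
      (Dk k) ((x k - (F'inv (x k)) (F (x k))) - (Ek k) ((F'inv (x k)) (F (x k))))) :
    ∀ k, ‖x (k + 1) - z‖ ≤
      (1 / 2) * L * K * ‖x k - z‖ ^ 2 + ‖Ek k‖ * K * M * ‖x k - z‖ +
      ‖Dk k‖ * (‖z‖ + (1 / 2) * L * K * ‖x k - z‖ ^ 2 +
        ‖Ek k‖ * K * M * ‖x k - z‖) := by
  intro k
  set u := x k with hu
  set e := u - z with he
  have hue : u = z + e := by simp [he]
  -- Taylor / Lipschitz estimate: ‖F u - F' u e‖ ≤ (L/2) ‖e‖²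
  have key : ‖F u - (F' u) e‖ ≤ L / 2 * ‖e‖ ^ 2 := by
    set γ : ℝ → EuclideanSpace ℝ (Fin n) :=
      fun t => F (z + t • e) - t • ((F' u) e) with hγ
    have hpath : ∀ t : ℝ, HasDerivAt (fun s : ℝ => z + s • e) e t := by
      intro t
      simpa using ((hasDerivAt_id t).smul_const e).const_add z
    have hderiv : ∀ t : ℝ,
        HasDerivAt γ ((F' (z + t • e)) e - (F' u) e) t := by
      intro t
      have h2 : HasDerivAt (fun s : ℝ => s • ((F' u) e)) ((F' u) e) t := by
        simpa using (hasDerivAt_id t).smul_const ((F' u) e)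
      exact ((hF (z + t • e)).comp_hasDerivAt t (hpath t)).sub h2
    have hcont : Continuous fun t : ℝ => (F' (z + t • e)) e - (F' u) e := by
      exact ((hF'c.comp (continuous_const.add (continuous_id.smul continuous_const))).clm_apply continuous_const).sub
        continuous_const
    have hint : IntervalIntegrable
        (fun t : ℝ => (F' (z + t • e)) e - (F' u) e) MeasureTheory.volume 0 1 :=
      hcont.intervalIntegrable 0 1
    have hFTC : ∫ t in (0:ℝ)..1, ((F' (z + t • e)) e - (F' u) e) = γ 1 - γ 0 :=
      intervalIntegral.integral_eq_sub_of_hasDerivAt (fun t _ => hderiv t) hint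
    have hγ10 : γ 1 - γ 0 = F u - (F' u) e := by
      simp [hγ, hue, hz]
    have hbound : ∀ t ∈ Set.uIoc (0:ℝ) 1,
        ‖(F' (z + t • e)) e - (F' u) e‖ ≤ L * ‖e‖ ^ 2 * (1 - t) := by
      intro t ht
      rw [Set.uIoc_of_le (by norm_num : (0:ℝ) ≤ 1)] at ht
      have h1 : (F' (z + t • e)) e - (F' u) e = (F' (z + t • e) - F' u) e := by
        simp
      rw [h1]
      calc ‖(F' (z + t • e) - F' u) e‖ ≤ ‖F' (z + t • e) - F' u‖ * ‖e‖ :=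
            (F' (z + t • e) - F' u).le_opNorm e
        _ ≤ (L * ‖(z + t • e) - u‖) * ‖e‖ :=
            mul_le_mul_of_nonneg_right (hLip _ _) (norm_nonneg e)
        _ = L * ‖e‖ ^ 2 * (1 - t) := by
            have h2 : (z + t • e) - u = (t - 1) • e := by
              rw [hue]; module
            rw [h2, norm_smul]
            have h3 : ‖t - 1‖ = 1 - t := by
              rw [Real.norm_eq_abs, abs_of_nonpos (by linarith [ht.2])]; ring
            rw [h3]; ring
    have hbint : IntervalIntegrable (fun t : ℝ => L * ‖e‖ ^ 2 * (1 - t))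
        MeasureTheory.volume 0 1 :=
      (continuous_const.mul (continuous_const.sub continuous_id)).intervalIntegrable 0 1
    have := intervalIntegral.norm_integral_le_abs_of_norm_le
      ((MeasureTheory.ae_restrict_iff' measurableSet_uIoc).2
        (Filter.Eventually.of_forall hbound)) hbint
    rw [hFTC, hγ10] at this
    have hval : (∫ t in (0:ℝ)..1, L * ‖e‖ ^ 2 * (1 - t)) = L / 2 * ‖e‖ ^ 2 := by
      rw [intervalIntegral.integral_const_mul]
      have hsub : ∫ t in (0:ℝ)..1, (1 - t) =
          (∫ _t in (0:ℝ)..1, (1:ℝ)) - ∫ t in (0:ℝ)..1, t :=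
        intervalIntegral.integral_sub intervalIntegrable_const
          (continuous_id.intervalIntegrable 0 1)
      rw [hsub]
      simp [integral_id]
      ring
    rw [hval, abs_of_nonneg (by positivity)] at this
    exact this
  -- mean value: ‖F u‖ ≤ M ‖e‖
  have hFu : ‖F u‖ ≤ M * ‖e‖ := by
    have := Convex.norm_image_sub_le_of_norm_hasFDerivWithin_le
      (f := F) (f' := F') (fun y _ => (hF y).hasFDerivWithinAt)
      (fun y _ => hM y) convex_univ (Set.mem_univ z) (Set.mem_univ u)
    simpa [hz, he] using this
  set w := (F'inv u) (F u) with hw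
  -- Newton step error
  have hNewton : ‖(u - w) - z‖ ≤ 1 / 2 * L * K * ‖e‖ ^ 2 := by
    have hid : (F'inv u) ((F' u) e) = e := by
      have := (hinv u).2
      calc (F'inv u) ((F' u) e) = ((F'inv u).comp (F' u)) e := rfl
        _ = e := by rw [this]; rfl
    have heq : (u - w) - z = (F'inv u) ((F' u) e - F u) := by
      rw [map_sub, hid, hw]
      rw [he]; abel
    rw [heq]
    calc ‖(F'inv u) ((F' u) e - F u)‖ ≤ ‖F'inv u‖ * ‖(F' u) e - F u‖ :=
          (F'inv u).le_opNorm _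
      _ ≤ K * (L / 2 * ‖e‖ ^ 2) := by
          apply mul_le_mul (hK u) _ (norm_nonneg _) hK0
          rw [norm_sub_rev]; exact key
      _ = 1 / 2 * L * K * ‖e‖ ^ 2 := by ring
  have hwb : ‖w‖ ≤ K * M * ‖e‖ := by
    calc ‖w‖ ≤ ‖F'inv u‖ * ‖F u‖ := (F'inv u).le_opNorm _
      _ ≤ K * (M * ‖e‖) := mul_le_mul (hK u) hFu (norm_nonneg _) hK0
      _ = K * M * ‖e‖ := by ring
  set y := (u - w) - (Ek k) w with hy
  set A := 1 / 2 * L * K * ‖e‖ ^ 2 with hA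
  set B := ‖Ek k‖ * K * M * ‖e‖ with hB
  have hEkw : ‖(Ek k) w‖ ≤ B := by
    calc ‖(Ek k) w‖ ≤ ‖Ek k‖ * ‖w‖ := (Ek k).le_opNorm w
      _ ≤ ‖Ek k‖ * (K * M * ‖e‖) :=
          mul_le_mul_of_nonneg_left hwb (norm_nonneg _)
      _ = B := by rw [hB]; ring
  have hyz : ‖y - z‖ ≤ A + B := by
    have : y - z = ((u - w) - z) - (Ek k) w := by rw [hy]; abel
    rw [this]
    calc ‖((u - w) - z) - (Ek k) w‖ ≤ ‖(u - w) - z‖ + ‖(Ek k) w‖ :=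
          norm_sub_le _ _
      _ ≤ A + B := add_le_add hNewton hEkw
  have hxk1 : x (k + 1) = y + (Dk k) y := by rw [hiter k, hy, hw]
  have hyn : ‖y‖ ≤ ‖z‖ + A + B := by
    have hyy : y = (y - z) + z := by abel
    calc ‖y‖ = ‖(y - z) + z‖ := by rw [← hyy]
      _ ≤ ‖y - z‖ + ‖z‖ := norm_add_le _ _
      _ ≤ ‖z‖ + A + B := by linarith
  have hfinal : ‖x (k + 1) - z‖ ≤ A + B + ‖Dk k‖ * (‖z‖ + A + B) := by
    have : x (k + 1) - z = (y - z) + (Dk k) y := by rw [hxk1]; abel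
    rw [this]
    calc ‖(y - z) + (Dk k) y‖ ≤ ‖y - z‖ + ‖(Dk k) y‖ := norm_add_le _ _
      _ ≤ (A + B) + ‖Dk k‖ * (‖z‖ + A + B) := by
          apply add_le_add hyz
          calc ‖(Dk k) y‖ ≤ ‖Dk k‖ * ‖y‖ := (Dk k).le_opNorm y
            _ ≤ ‖Dk k‖ * (‖z‖ + A + B) :=
                mul_le_mul_of_nonneg_left hyn (norm_nonneg _)
  exact hfinal
end

section
/- Let F : ℝⁿ → ℝⁿ be continuously differentiable, let z ≠ 0 be a zero of F, and suppose ‖F'(x)⁻¹‖ ≤ K, ‖F'(x) − F'(y)‖ ≤ L‖x − y‖, and ‖F'(x)‖ ≤ M for all x, y. If x_{k+1} = (I + D_k)(g(x_k) − E_k F'(x_k)⁻¹F(x_k)) with g(x) = x − F'(x)⁻¹F(x), then the relative errors r_j = ‖z − x_j‖/‖z‖ satisfy r_{k+1} ≤ (1/2)LK(1 + ‖D_k‖)‖z‖ r_k² + ‖E_k‖KM(1 + ‖D_k‖) r_k + ‖D_k‖. -/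
open Set

lemma taylor_quad {E : Type*} [NormedAddCommGroup E] [NormedSpace ℝ E]
    (F : E → E) (F' : E → E →L[ℝ] E) (hF : ∀ u, HasFDerivAt F (F' u) u)
    (L : ℝ) (hLip : ∀ u v, ‖F' u - F' v‖ ≤ L * ‖u - v‖) (a b : E) :
    ‖F b - F a - F' a (b - a)‖ ≤ L / 2 * ‖b - a‖ ^ 2 := by
  set v := b - a with hv
  set φ : ℝ → E := fun t => F (a + t • v) - F a - t • F' a v with hφ
  have hφd : ∀ t : ℝ, HasDerivAt φ ((F' (a + t • v) - F' a) v) t := by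
    intro t
    have h1 : HasDerivAt (fun t : ℝ => a + t • v) v t := by
      simpa using ((hasDerivAt_id t).smul_const v).const_add a
    have h2 : HasDerivAt (fun t : ℝ => F (a + t • v)) (F' (a + t • v) v) t := by
      exact (hF (a + t • v)).comp_hasDerivAt t h1
    have h3 : HasDerivAt (fun t : ℝ => t • F' a v) (F' a v) t := by
      simpa using (hasDerivAt_id t).smul_const (F' a v)
    rw [ContinuousLinearMap.sub_apply]
    exact (h2.sub_const (F a)).sub h3
  set B : ℝ → ℝ := fun t => L / 2 * ‖v‖ ^ 2 * t ^ 2 with hB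
  have hBd : ∀ t : ℝ, HasDerivAt B (L * ‖v‖ ^ 2 * t) t := by
    intro t
    have := (hasDerivAt_pow 2 t).const_mul (L / 2 * ‖v‖ ^ 2)
    refine this.congr_deriv ?_
    rw [show (2:ℕ) - 1 = 1 from rfl]; push_cast; ring
  have key : ∀ t ∈ Icc (0:ℝ) 1, ‖φ t‖ ≤ B t := by
    refine image_norm_le_of_norm_deriv_right_le_deriv_boundary
      (fun t _ => (hφd t).continuousAt.continuousWithinAt)
      (fun t _ => (hφd t).hasDerivWithinAt) ?_ hBd ?_
    · simp [hφ, hB]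
    · intro t ht
      calc ‖(F' (a + t • v) - F' a) v‖ ≤ ‖F' (a + t • v) - F' a‖ * ‖v‖ :=
            (F' (a + t • v) - F' a).le_opNorm v
        _ ≤ (L * ‖(a + t • v) - a‖) * ‖v‖ :=
            mul_le_mul_of_nonneg_right (hLip _ _) (norm_nonneg v)
        _ = L * ‖v‖ ^ 2 * t := by
            have h : (a + t • v) - a = t • v := by abel
            rw [h, norm_smul, Real.norm_eq_abs, abs_of_nonneg ht.1]
            ring
  have h1 := key 1 ⟨zero_le_one, le_refl 1⟩
  simpa [hφ, hB, hv] using h1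



/-- **Inequality (9).** Under the uniform bounds `‖F'(x)⁻¹‖ ≤ K`,
`‖F'(x) − F'(y)‖ ≤ L‖x − y‖`, `‖F'(x)‖ ≤ M`, a nonzero zero `z` of `F`, and
the perturbed quasi-Newton iteration
`x_{k+1} = (I + D_k)(g(x_k) − E_k F'(x_k)⁻¹F(x_k))`, the relative errors
`r_j = ‖z − x_j‖/‖z‖` satisfy
`r_{k+1} ≤ (1/2)LK(1 + ‖D_k‖)‖z‖ r_k² + ‖E_k‖KM(1 + ‖D_k‖) r_k + ‖D_k‖`. -/
theorem quasi_newton_relative_error_bound {n : ℕ}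
    (F : EuclideanSpace ℝ (Fin n) → EuclideanSpace ℝ (Fin n))
    (F' F'inv : EuclideanSpace ℝ (Fin n) →
      (EuclideanSpace ℝ (Fin n) →L[ℝ] EuclideanSpace ℝ (Fin n)))
    (hF : ∀ u, HasFDerivAt F (F' u) u)
    (hF'c : Continuous F')
    (hinv : ∀ u,
      (F' u).comp (F'inv u) = ContinuousLinearMap.id ℝ (EuclideanSpace ℝ (Fin n)) ∧
      (F'inv u).comp (F' u) = ContinuousLinearMap.id ℝ (EuclideanSpace ℝ (Fin n)))
    (K L M : ℝ)
    (hK : ∀ u, ‖F'inv u‖ ≤ K)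
    (hLip : ∀ u v, ‖F' u - F' v‖ ≤ L * ‖u - v‖)
    (hM : ∀ u, ‖F' u‖ ≤ M)
    (z : EuclideanSpace ℝ (Fin n)) (hz : F z = 0) (hz0 : z ≠ 0)
    (x : ℕ → EuclideanSpace ℝ (Fin n))
    (Dk Ek : ℕ → (EuclideanSpace ℝ (Fin n) →L[ℝ] EuclideanSpace ℝ (Fin n)))
    (hiter : ∀ k, x (k + 1) =
      ((x k - (F'inv (x k)) (F (x k))) - (Ek k) ((F'inv (x k)) (F (x k)))) +
      (Dk k) ((x k - (F'inv (x k)) (F (x k))) - (Ek k) ((F'inv (x k)) (F (x k)))))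
    (r : ℕ → ℝ) (hr : ∀ j, r j = ‖z - x j‖ / ‖z‖) :
    ∀ k, r (k + 1) ≤
      (1 / 2) * L * K * (1 + ‖Dk k‖) * ‖z‖ * (r k) ^ 2 +
      ‖Ek k‖ * K * M * (1 + ‖Dk k‖) * r k + ‖Dk k‖ := by
  intro k
  have hz' : (0:ℝ) < ‖z‖ := norm_pos_iff.mpr hz0
  have hK0 : (0:ℝ) ≤ K := le_trans (norm_nonneg _) (hK z)
  have hfia : ∀ u v, F'inv u (F' u v) = v := by
    intro u v
    have := congrFun (congrArg DFunLike.coe (hinv u).2) v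
    simpa using this
  set xk := x k with hxk
  set p := F'inv xk (F xk) with hp
  set ρ := ‖z - xk‖ with hρdef
  -- Taylor estimate
  have hT : ‖F z - F xk - F' xk (z - xk)‖ ≤ L / 2 * ρ ^ 2 :=
    taylor_quad F F' hF L hLip xk z
  -- mean value estimate
  have hMV : ‖F xk‖ ≤ M * ρ := by
    have := convex_univ.norm_image_sub_le_of_norm_hasFDerivWithin_le
      (f := F) (f' := F') (fun u _ => (hF u).hasFDerivWithinAt)
      (fun u _ => hM u) (mem_univ z) (mem_univ xk)
    rw [hz, sub_zero] at this
    rwa [hρdef, norm_sub_rev]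
  -- bound on ‖F'inv xk w‖
  have hKop : ∀ w, ‖F'inv xk w‖ ≤ K * ‖w‖ := fun w =>
    le_trans ((F'inv xk).le_opNorm w)
      (mul_le_mul_of_nonneg_right (hK xk) (norm_nonneg w))
  -- Newton point estimate
  have hNid : z - (xk - p) = F'inv xk (F' xk (z - xk) - (F z - F xk)) := by
    rw [map_sub, hfia, hz, zero_sub, map_neg, hp]
    abel
  have hN : ‖z - (xk - p)‖ ≤ K * (L / 2 * ρ ^ 2) := by
    rw [hNid]
    refine le_trans (hKop _) (mul_le_mul_of_nonneg_left ?_ hK0)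
    rw [show F' xk (z - xk) - (F z - F xk) = -(F z - F xk - F' xk (z - xk)) by abel,
      norm_neg]
    exact hT
  have hpb : ‖p‖ ≤ K * (M * ρ) := le_trans (hKop _) (mul_le_mul_of_nonneg_left hMV hK0)
  set w := (z - (xk - p)) + Ek k p with hw
  have hwb : ‖w‖ ≤ K * (L / 2 * ρ ^ 2) + ‖Ek k‖ * (K * (M * ρ)) := by
    refine le_trans (norm_add_le _ _) (add_le_add hN ?_)
    exact le_trans ((Ek k).le_opNorm p)
      (mul_le_mul_of_nonneg_left hpb (norm_nonneg _))
  have hid : z - x (k + 1) = w + Dk k w - Dk k z := by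
    rw [hiter k]
    have h2 : (x k - (F'inv (x k)) (F (x k))) - Ek k ((F'inv (x k)) (F (x k))) = z - w := by
      rw [hw, hp, hxk]; abel
    rw [h2, map_sub]
    abel
  have hDw : ‖Dk k w‖ ≤ ‖Dk k‖ * ‖w‖ := (Dk k).le_opNorm w
  have hDz : ‖Dk k z‖ ≤ ‖Dk k‖ * ‖z‖ := (Dk k).le_opNorm z
  have hbound : ‖z - x (k + 1)‖ ≤
      (1 + ‖Dk k‖) * (K * (L / 2 * ρ ^ 2) + ‖Ek k‖ * (K * (M * ρ))) + ‖Dk k‖ * ‖z‖ := by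
    rw [hid]
    have t1 : ‖w + Dk k w - Dk k z‖ ≤ ‖w‖ + ‖Dk k w‖ + ‖Dk k z‖ :=
      le_trans (norm_sub_le _ _) (by gcongr; exact norm_add_le _ _)
    have hD0 : (0:ℝ) ≤ ‖Dk k‖ := norm_nonneg _
    nlinarith [mul_le_mul_of_nonneg_left hwb hD0]
  have hρ : ρ = r k * ‖z‖ := by
    rw [hr k, hρdef, div_mul_cancel₀ _ (ne_of_gt hz')]
  rw [hr (k + 1), div_le_iff₀ hz']
  calc ‖z - x (k + 1)‖ ≤
      (1 + ‖Dk k‖) * (K * (L / 2 * ρ ^ 2) + ‖Ek k‖ * (K * (M * ρ))) + ‖Dk k‖ * ‖z‖ := hbound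
    _ = ((1 / 2) * L * K * (1 + ‖Dk k‖) * ‖z‖ * (r k) ^ 2 +
        ‖Ek k‖ * K * M * (1 + ‖Dk k‖) * r k + ‖Dk k‖) * ‖z‖ := by
        rw [hρ]; ring
end

section
/- Let F : ℝⁿ → ℝⁿ be continuously differentiable, let z ≠ 0 be a zero of F, suppose ‖F'(x)⁻¹‖ ≤ K, ‖F'(x) − F'(y)‖ ≤ L‖x − y‖, ‖F'(x)‖ ≤ M for all x, y, and let x_{k+1} = (I + D_k)(g(x_k) − E_k F'(x_k)⁻¹F(x_k)) with ‖D_k‖ ≤ D and ‖E_k‖ ≤ E. If the relative error r_k = ‖z − x_k‖/‖z‖ satisfies D − [1 − EMK(1 + D)] r_k + (1/2)LK(1 + D)‖z‖ r_k² < 0, then r_{k+1} < r_k. -/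
open Set

set_option maxHeartbeats 1000000
set_option synthInstance.maxHeartbeats 400000

lemma taylor_quadratic_bound {n : ℕ}
    (F : EuclideanSpace ℝ (Fin n) → EuclideanSpace ℝ (Fin n))
    (F' : EuclideanSpace ℝ (Fin n) →
      (EuclideanSpace ℝ (Fin n) →L[ℝ] EuclideanSpace ℝ (Fin n)))
    (hF : ∀ u, HasFDerivAt F (F' u) u)
    (L : ℝ)
    (hLip : ∀ u v, ‖F' u - F' v‖ ≤ L * ‖u - v‖)
    (a b : EuclideanSpace ℝ (Fin n)) :
    ‖F b - F a - F' a (b - a)‖ ≤ L / 2 * ‖b - a‖ ^ 2 := by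
  set e := b - a with he
  set f : ℝ → EuclideanSpace ℝ (Fin n) :=
    fun t => F (a + t • e) - F a - t • (F' a e) with hf
  set f' : ℝ → EuclideanSpace ℝ (Fin n) :=
    fun t => F' (a + t • e) e - F' a e with hf'
  have hderiv : ∀ t : ℝ, HasDerivAt f (f' t) t := by
    intro t
    have h1 : HasDerivAt (fun t : ℝ => a + t • e) e t := by
      simpa using ((hasDerivAt_id t).smul_const e).const_add a
    have h2 : HasDerivAt (fun t : ℝ => F (a + t • e)) (F' (a + t • e) e) t :=
      (hF _).comp_hasDerivAt t h1
    have h3 : HasDerivAt (fun t : ℝ => t • (F' a e)) (F' a e) t := by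
      simpa using (hasDerivAt_id t).smul_const (F' a e)
    exact (h2.sub_const (F a)).sub h3
  have hcont : ContinuousOn f (Icc (0:ℝ) 1) :=
    fun t _ => (hderiv t).continuousAt.continuousWithinAt
  have hder : ∀ t ∈ Ico (0:ℝ) 1, HasDerivWithinAt f (f' t) (Ici t) t :=
    fun t _ => (hderiv t).hasDerivWithinAt
  have h0 : ‖f 0‖ ≤ L * ‖e‖ ^ 2 * (0:ℝ) ^ 2 / 2 := by simp [hf]
  have hB : ∀ t : ℝ, HasDerivAt (fun t : ℝ => L * ‖e‖ ^ 2 * t ^ 2 / 2)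
      (L * ‖e‖ ^ 2 * t) t := by
    intro t
    have : HasDerivAt (fun t : ℝ => L * ‖e‖ ^ 2 * t ^ 2 / 2)
        (L * ‖e‖ ^ 2 * (2 * t ^ 1) / 2) t :=
      (((hasDerivAt_pow 2 t).const_mul (L * ‖e‖ ^ 2)).div_const 2)
    exact this.congr_deriv (by ring)
  have hbound : ∀ t ∈ Ico (0:ℝ) 1, ‖f' t‖ ≤ L * ‖e‖ ^ 2 * t := by
    intro t ht
    have h1 : ‖f' t‖ ≤ ‖F' (a + t • e) - F' a‖ * ‖e‖ := by
      rw [hf']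
      simpa using (F' (a + t • e) - F' a).le_opNorm e
    have h2 : ‖F' (a + t • e) - F' a‖ ≤ L * (t * ‖e‖) := by
      have := hLip (a + t • e) a
      rwa [add_sub_cancel_left, norm_smul, Real.norm_eq_abs,
        abs_of_nonneg ht.1] at this
    calc ‖f' t‖ ≤ (L * (t * ‖e‖)) * ‖e‖ :=
          h1.trans (mul_le_mul_of_nonneg_right h2 (norm_nonneg e))
      _ = L * ‖e‖ ^ 2 * t := by ring
  have key : ∀ t ∈ Icc (0:ℝ) 1, ‖f t‖ ≤ L * ‖e‖ ^ 2 * t ^ 2 / 2 :=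
    fun t ht => image_norm_le_of_norm_deriv_right_le_deriv_boundary
      hcont hder h0 hB hbound ht
  have h1 := key 1 (by norm_num)
  have hb : a + e = b := by rw [he]; abel
  rw [hf] at h1
  simp only [one_smul] at h1
  rw [hb] at h1
  calc ‖F b - F a - F' a (b - a)‖ = ‖F b - F a - (1:ℝ) • (F' a e)‖ := by
        rw [one_smul, he]
    _ ≤ L * ‖e‖ ^ 2 * 1 ^ 2 / 2 := by simpa using h1
    _ = L / 2 * ‖b - a‖ ^ 2 := by rw [he]; ring

/-- **Section 3.1 (stagnation).** Under the uniform bounds `‖F'(x)⁻¹‖ ≤ K`,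
`‖F'(x) − F'(y)‖ ≤ L‖x − y‖`, `‖F'(x)‖ ≤ M`, a nonzero zero `z` of `F`, the
perturbed quasi-Newton iteration with `‖D_k‖ ≤ D` and `‖E_k‖ ≤ E`: if the
relative error `r_k = ‖z − x_k‖/‖z‖` satisfies
`D − [1 − EMK(1 + D)] r_k + (1/2)LK(1 + D)‖z‖ r_k² < 0`, then
`r_{k+1} < r_k`. -/
theorem quasi_newton_error_reduction {n : ℕ}
    (F : EuclideanSpace ℝ (Fin n) → EuclideanSpace ℝ (Fin n))
    (F' F'inv : EuclideanSpace ℝ (Fin n) →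
      (EuclideanSpace ℝ (Fin n) →L[ℝ] EuclideanSpace ℝ (Fin n)))
    (hF : ∀ u, HasFDerivAt F (F' u) u)
    (hF'c : Continuous F')
    (hinv : ∀ u,
      (F' u).comp (F'inv u) = ContinuousLinearMap.id ℝ (EuclideanSpace ℝ (Fin n)) ∧
      (F'inv u).comp (F' u) = ContinuousLinearMap.id ℝ (EuclideanSpace ℝ (Fin n)))
    (K L M : ℝ)
    (hK : ∀ u, ‖F'inv u‖ ≤ K)
    (hLip : ∀ u v, ‖F' u - F' v‖ ≤ L * ‖u - v‖)
    (hM : ∀ u, ‖F' u‖ ≤ M)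
    (z : EuclideanSpace ℝ (Fin n)) (hz : F z = 0) (hz0 : z ≠ 0)
    (x : ℕ → EuclideanSpace ℝ (Fin n))
    (Dk Ek : ℕ → (EuclideanSpace ℝ (Fin n) →L[ℝ] EuclideanSpace ℝ (Fin n)))
    (hiter : ∀ k, x (k + 1) =
      ((x k - (F'inv (x k)) (F (x k))) - (Ek k) ((F'inv (x k)) (F (x k)))) +
      (Dk k) ((x k - (F'inv (x k)) (F (x k))) - (Ek k) ((F'inv (x k)) (F (x k)))))
    (D E : ℝ) (hD : ∀ k, ‖Dk k‖ ≤ D) (hE : ∀ k, ‖Ek k‖ ≤ E)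
    (r : ℕ → ℝ) (hr : ∀ j, r j = ‖z - x j‖ / ‖z‖) :
    ∀ k, D - (1 - E * M * K * (1 + D)) * r k +
        (1 / 2) * L * K * (1 + D) * ‖z‖ * (r k) ^ 2 < 0 →
      r (k + 1) < r k := by
  intro k hyp
  have hzpos : (0:ℝ) < ‖z‖ := norm_pos_iff.mpr hz0
  set e := z - x k with he
  set s := (F'inv (x k)) (F (x k)) with hs
  set a := (x k - s) - (Ek k) s with ha
  have hK0 : (0:ℝ) ≤ K := (norm_nonneg _).trans (hK (x k))
  have hD0 : (0:ℝ) ≤ D := (norm_nonneg _).trans (hD k)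
  have hE0 : (0:ℝ) ≤ E := (norm_nonneg _).trans (hE k)
  have hM0 : (0:ℝ) ≤ M := (norm_nonneg _).trans (hM (x k))
  -- Taylor bound
  have htaylor : ‖F z - F (x k) - F' (x k) e‖ ≤ L / 2 * ‖e‖ ^ 2 :=
    taylor_quadratic_bound F F' hF L hLip (x k) z
  -- Newton error: z - x k + s
  have hid : (F'inv (x k)) ((F' (x k)) e) = e := by
    have := (hinv (x k)).2
    calc (F'inv (x k)) ((F' (x k)) e)
        = ((F'inv (x k)).comp (F' (x k))) e := rfl
      _ = e := by rw [this]; rfl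
  have hnewt : e + s = (F'inv (x k)) ((F' (x k)) e + F (x k)) := by
    rw [map_add, hid]
  have hnewt_bound : ‖e + s‖ ≤ K * (L / 2 * ‖e‖ ^ 2) := by
    have h1 : ‖(F' (x k)) e + F (x k)‖ = ‖F z - F (x k) - F' (x k) e‖ := by
      rw [← norm_neg (F z - F (x k) - F' (x k) e)]
      congr 1
      rw [hz]
      abel
    calc ‖e + s‖ = ‖(F'inv (x k)) ((F' (x k)) e + F (x k))‖ := by rw [hnewt]
      _ ≤ ‖F'inv (x k)‖ * ‖(F' (x k)) e + F (x k)‖ :=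
          (F'inv (x k)).le_opNorm _
      _ ≤ K * (L / 2 * ‖e‖ ^ 2) := by
          rw [h1]
          exact mul_le_mul (hK _) htaylor (norm_nonneg _) hK0
  -- ‖s‖ ≤ K * M * ‖e‖
  have hFxk : ‖F (x k)‖ ≤ M * ‖e‖ := by
    have := Convex.norm_image_sub_le_of_norm_hasFDerivWithin_le
      (f := F) (f' := F') (s := (univ : Set (EuclideanSpace ℝ (Fin n))))
      (fun u _ => (hF u).hasFDerivWithinAt) (fun u _ => hM u) convex_univ
      (mem_univ z) (mem_univ (x k))
    rw [hz, sub_zero] at this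
    calc ‖F (x k)‖ ≤ M * ‖x k - z‖ := this
      _ = M * ‖e‖ := by rw [he, norm_sub_rev]
  have hsb : ‖s‖ ≤ K * (M * ‖e‖) := by
    calc ‖s‖ ≤ ‖F'inv (x k)‖ * ‖F (x k)‖ := (F'inv (x k)).le_opNorm _
      _ ≤ K * (M * ‖e‖) := mul_le_mul (hK _) hFxk (norm_nonneg _) hK0
  -- bound on a
  have hza : z - a = (e + s) + (Ek k) s := by rw [ha, he]; abel
  have hab : ‖a‖ ≤ ‖z‖ + (K * (L / 2 * ‖e‖ ^ 2) + E * (K * (M * ‖e‖))) := by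
    have hEs : ‖(Ek k) s‖ ≤ E * (K * (M * ‖e‖)) :=
      ((Ek k).le_opNorm s).trans (mul_le_mul (hE k) hsb (norm_nonneg _) hE0)
    calc ‖a‖ = ‖z - (z - a)‖ := by congr 1; abel
      _ ≤ ‖z‖ + ‖z - a‖ := norm_sub_le _ _
      _ ≤ ‖z‖ + (K * (L / 2 * ‖e‖ ^ 2) + E * (K * (M * ‖e‖))) := by
          refine add_le_add le_rfl ?_
          rw [hza]
          exact (norm_add_le _ _).trans (add_le_add hnewt_bound hEs)
  -- main estimate
  have hiterk := hiter k
  have hmain : ‖z - x (k + 1)‖ ≤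
      K * (L / 2 * ‖e‖ ^ 2) + E * (K * (M * ‖e‖)) +
        D * (‖z‖ + (K * (L / 2 * ‖e‖ ^ 2) + E * (K * (M * ‖e‖)))) := by
    have hx1 : z - x (k + 1) = (z - a) - (Dk k) a := by
      rw [hiterk, ha, hs]; abel
    have hEs : ‖(Ek k) s‖ ≤ E * (K * (M * ‖e‖)) :=
      ((Ek k).le_opNorm s).trans (mul_le_mul (hE k) hsb (norm_nonneg _) hE0)
    have hDa : ‖(Dk k) a‖ ≤
        D * (‖z‖ + (K * (L / 2 * ‖e‖ ^ 2) + E * (K * (M * ‖e‖)))) :=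
      ((Dk k).le_opNorm a).trans (mul_le_mul (hD k) hab (norm_nonneg _) hD0)
    calc ‖z - x (k + 1)‖ = ‖(z - a) - (Dk k) a‖ := by rw [hx1]
      _ ≤ ‖z - a‖ + ‖(Dk k) a‖ := norm_sub_le _ _
      _ ≤ (K * (L / 2 * ‖e‖ ^ 2) + E * (K * (M * ‖e‖))) +
            D * (‖z‖ + (K * (L / 2 * ‖e‖ ^ 2) + E * (K * (M * ‖e‖)))) := by
          refine add_le_add ?_ hDa
          rw [hza]
          exact (norm_add_le _ _).trans (add_le_add hnewt_bound hEs)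
  -- conclude
  have hek : ‖e‖ = r k * ‖z‖ := by
    rw [hr k, he, div_mul_cancel₀ _ (ne_of_gt hzpos)]
  have hr1 : r (k + 1) = ‖z - x (k + 1)‖ / ‖z‖ := hr (k + 1)
  rw [hr1]
  rw [div_lt_iff₀ hzpos]
  have hlt : K * (L / 2 * ‖e‖ ^ 2) + E * (K * (M * ‖e‖)) +
      D * (‖z‖ + (K * (L / 2 * ‖e‖ ^ 2) + E * (K * (M * ‖e‖)))) < r k * ‖z‖ := by
    rw [hek]
    nlinarith [hzpos, sq_nonneg (r k), hyp]
  exact lt_of_le_of_lt hmain hlt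
end

section
/- Let F : ℝⁿ → ℝⁿ be continuously differentiable, let z ≠ 0 be a zero of F, suppose ‖F'(x)⁻¹‖ ≤ K, ‖F'(x) − F'(y)‖ ≤ L‖x − y‖, ‖F'(x)‖ ≤ M for all x, y, and let x_{k+1} = (I + D_k)(g(x_k) − E_k F'(x_k)⁻¹F(x_k)) with ‖D_k‖ ≤ D and ‖E_k‖ ≤ E. If C > 0 and D ≤ C r_k, where r_k = ‖z − x_k‖/‖z‖, then r_{k+1} ≤ ρ_k r_k with ρ_k = (1/2)LK(1 + D)‖z‖ r_k + EKM(1 + D) + C. -/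
lemma taylor_half_bound {EE : Type*} [NormedAddCommGroup EE] [NormedSpace ℝ EE]
    (F : EE → EE) (F' : EE → (EE →L[ℝ] EE)) (hF : ∀ u, HasFDerivAt F (F' u) u)
    (L : ℝ) (hLip : ∀ u v, ‖F' u - F' v‖ ≤ L * ‖u - v‖)
    (a b : EE) :
    ‖F b - F a - F' a (b - a)‖ ≤ L / 2 * (‖b - a‖ * ‖b - a‖) := by
  set N : ℝ := ‖b - a‖ with hN
  set c : ℝ := L / 2 * (N * N) with hc
  set φ : ℝ → EE := fun t => F (a + t • (b - a)) - F a - t • (F' a (b - a)) with hφdef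
  set φ' : ℝ → EE := fun t => F' (a + t • (b - a)) (b - a) - F' a (b - a) with hφ'def
  have hcurve : ∀ t : ℝ, HasDerivAt (fun t : ℝ => a + t • (b - a)) (b - a) t := by
    intro t
    simpa using ((hasDerivAt_id t).smul_const (b - a)).const_add a
  have hφ : ∀ t : ℝ, HasDerivAt φ (φ' t) t := by
    intro t
    have h1 : HasDerivAt (fun t : ℝ => F (a + t • (b - a)))
        (F' (a + t • (b - a)) (b - a)) t :=
      (hF (a + t • (b - a))).comp_hasDerivAt t (hcurve t)
    have h2 : HasDerivAt (fun t : ℝ => t • (F' a (b - a))) (F' a (b - a)) t := by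
      simpa using (hasDerivAt_id t).smul_const (F' a (b - a))
    exact (h1.sub_const (F a)).sub h2
  have hB : ∀ t : ℝ, HasDerivAt (fun t : ℝ => c * t ^ 2) (c * (2 * t)) t := by
    intro t
    simpa using (hasDerivAt_pow 2 t).const_mul c
  have key := image_norm_le_of_norm_deriv_right_le_deriv_boundary
    (f := φ) (a := 0) (b := 1) (f' := φ')
    (fun t _ => (hφ t).continuousAt.continuousWithinAt)
    (fun t _ => (hφ t).hasDerivWithinAt)
    (B := fun t => c * t ^ 2) (B' := fun t => c * (2 * t))
    (by simp [φ]) hB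
    (by
      intro t ht
      obtain ⟨ht0, ht1⟩ := ht
      have h1 : φ' t = (F' (a + t • (b - a)) - F' a) (b - a) := by
        simp [φ', ContinuousLinearMap.sub_apply]
      have h2 : ‖(F' (a + t • (b - a)) - F' a) (b - a)‖ ≤
          ‖F' (a + t • (b - a)) - F' a‖ * N :=
        ContinuousLinearMap.le_opNorm _ _
      have h3 : ‖F' (a + t • (b - a)) - F' a‖ ≤ L * (t * N) := by
        have := hLip (a + t • (b - a)) a
        simpa [norm_smul, Real.norm_eq_abs, abs_of_nonneg ht0, mul_assoc] using this
      have h4 : ‖φ' t‖ ≤ L * (t * N) * N := by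
        rw [h1]
        calc ‖(F' (a + t • (b - a)) - F' a) (b - a)‖ ≤ ‖F' (a + t • (b - a)) - F' a‖ * N := h2
        _ ≤ L * (t * N) * N := by
            apply mul_le_mul_of_nonneg_right h3 (norm_nonneg _)
      calc ‖φ' t‖ ≤ L * (t * N) * N := h4
      _ = c * (2 * t) := by rw [hc]; ring)
    (Set.right_mem_Icc.2 zero_le_one)
  have hφ1 : φ 1 = F b - F a - F' a (b - a) := by simp [φ]
  calc ‖F b - F a - F' a (b - a)‖ = ‖φ 1‖ := by rw [hφ1]
  _ ≤ c * 1 ^ 2 := key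
  _ = L / 2 * (N * N) := by rw [hc]; ring
set_option maxHeartbeats 1000000 in
/-- **Section 3.2, inequality (13).** Under the uniform bounds
`‖F'(x)⁻¹‖ ≤ K`, `‖F'(x) − F'(y)‖ ≤ L‖x − y‖`, `‖F'(x)‖ ≤ M`, a nonzero zero
`z` of `F`, the perturbed quasi-Newton iteration with `‖D_k‖ ≤ D`,
`‖E_k‖ ≤ E`, and `C > 0`: if `D ≤ C r_k` where `r_k = ‖z − x_k‖/‖z‖`, then
`r_{k+1} ≤ ρ_k r_k` with
`ρ_k = (1/2)LK(1 + D)‖z‖ r_k + EKM(1 + D) + C`. -/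
theorem quasi_newton_linear_decay {n : ℕ}
    (F : EuclideanSpace ℝ (Fin n) → EuclideanSpace ℝ (Fin n))
    (F' F'inv : EuclideanSpace ℝ (Fin n) →
      (EuclideanSpace ℝ (Fin n) →L[ℝ] EuclideanSpace ℝ (Fin n)))
    (hF : ∀ u, HasFDerivAt F (F' u) u)
    (hF'c : Continuous F')
    (hinv : ∀ u,
      (F' u).comp (F'inv u) = ContinuousLinearMap.id ℝ (EuclideanSpace ℝ (Fin n)) ∧
      (F'inv u).comp (F' u) = ContinuousLinearMap.id ℝ (EuclideanSpace ℝ (Fin n)))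
    (K L M : ℝ)
    (hK : ∀ u, ‖F'inv u‖ ≤ K)
    (hLip : ∀ u v, ‖F' u - F' v‖ ≤ L * ‖u - v‖)
    (hM : ∀ u, ‖F' u‖ ≤ M)
    (z : EuclideanSpace ℝ (Fin n)) (hz : F z = 0) (hz0 : z ≠ 0)
    (x : ℕ → EuclideanSpace ℝ (Fin n))
    (Dk Ek : ℕ → (EuclideanSpace ℝ (Fin n) →L[ℝ] EuclideanSpace ℝ (Fin n)))
    (hiter : ∀ k, x (k + 1) =
      ((x k - (F'inv (x k)) (F (x k))) - (Ek k) ((F'inv (x k)) (F (x k)))) +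
      (Dk k) ((x k - (F'inv (x k)) (F (x k))) - (Ek k) ((F'inv (x k)) (F (x k)))))
    (D E : ℝ) (hD : ∀ k, ‖Dk k‖ ≤ D) (hE : ∀ k, ‖Ek k‖ ≤ E)
    (C : ℝ) (hC : 0 < C)
    (r : ℕ → ℝ) (hr : ∀ j, r j = ‖z - x j‖ / ‖z‖) :
    ∀ k, D ≤ C * r k →
      r (k + 1) ≤
        ((1 / 2) * L * K * (1 + D) * ‖z‖ * r k + E * K * M * (1 + D) + C) * r k := by
  intro k hDk
  have hZ : (0:ℝ) < ‖z‖ := by rwa [norm_pos_iff]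
  set xk := x k with hxk
  set s := (F'inv xk) (F xk) with hs
  set w := (xk - s) - (Ek k) s with hw
  set N : ℝ := ‖z - xk‖ with hNdef
  have hK0 : 0 ≤ K := le_trans (norm_nonneg _) (hK z)
  have hM0 : 0 ≤ M := le_trans (norm_nonneg _) (hM z)
  have hD0 : 0 ≤ D := le_trans (norm_nonneg _) (hD k)
  have hE0 : 0 ≤ E := le_trans (norm_nonneg _) (hE k)
  have hN0 : 0 ≤ N := norm_nonneg _
  -- Taylor estimate
  have hT : ‖F z - F xk - (F' xk) (z - xk)‖ ≤ L / 2 * (N * N) :=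
    taylor_half_bound F F' hF L hLip xk z
  -- Newton step identity
  have hkey : (F'inv xk) ((F' xk) (z - xk)) = z - xk := by
    have := congrArg (fun T : EuclideanSpace ℝ (Fin n) →L[ℝ] EuclideanSpace ℝ (Fin n) =>
      T (z - xk)) (hinv xk).2
    simpa using this
  have hNe : z - (xk - s) = -((F'inv xk) (F z - F xk - (F' xk) (z - xk))) := by
    rw [map_sub, map_sub, hkey, hz, map_zero]
    abel
  have hNstep : ‖z - (xk - s)‖ ≤ K * (L / 2 * (N * N)) := by
    rw [hNe, norm_neg]
    calc ‖(F'inv xk) (F z - F xk - (F' xk) (z - xk))‖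
        ≤ ‖F'inv xk‖ * ‖F z - F xk - (F' xk) (z - xk)‖ :=
          ContinuousLinearMap.le_opNorm _ _
      _ ≤ K * (L / 2 * (N * N)) :=
          mul_le_mul (hK xk) hT (norm_nonneg _) hK0
  -- bound on ‖F xk‖ via mean value
  have hFxk : ‖F xk‖ ≤ M * N := by
    have h := convex_univ.norm_image_sub_le_of_norm_hasFDerivWithin_le
      (f := F) (f' := F') (fun u _ => (hF u).hasFDerivWithinAt)
      (fun u _ => hM u) (Set.mem_univ z) (Set.mem_univ xk)
    calc ‖F xk‖ = ‖F xk - F z‖ := by rw [hz, sub_zero]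
      _ ≤ M * ‖xk - z‖ := h
      _ = M * N := by rw [norm_sub_rev]
  have hsb : ‖s‖ ≤ K * (M * N) := by
    calc ‖s‖ ≤ ‖F'inv xk‖ * ‖F xk‖ := ContinuousLinearMap.le_opNorm _ _
      _ ≤ K * (M * N) := mul_le_mul (hK xk) hFxk (norm_nonneg _) hK0
  have hEs : ‖(Ek k) s‖ ≤ E * (K * (M * N)) := by
    calc ‖(Ek k) s‖ ≤ ‖Ek k‖ * ‖s‖ := ContinuousLinearMap.le_opNorm _ _
      _ ≤ E * (K * (M * N)) := mul_le_mul (hE k) hsb (norm_nonneg _) hE0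
  have hzw : ‖z - w‖ ≤ K * (L / 2 * (N * N)) + E * (K * (M * N)) := by
    have : z - w = (z - (xk - s)) + (Ek k) s := by rw [hw]; abel
    rw [this]
    exact le_trans (norm_add_le _ _) (add_le_add hNstep hEs)
  have hwb : ‖w‖ ≤ ‖z‖ + ‖z - w‖ := by
    simpa [sub_sub_cancel] using norm_sub_le z (z - w)
  have hDkw : ‖(Dk k) w‖ ≤ D * ‖w‖ := by
    calc ‖(Dk k) w‖ ≤ ‖Dk k‖ * ‖w‖ := ContinuousLinearMap.le_opNorm _ _
      _ ≤ D * ‖w‖ := mul_le_mul_of_nonneg_right (hD k) (norm_nonneg _)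
  have hx1 : ‖z - x (k + 1)‖ ≤ ‖z - w‖ + ‖(Dk k) w‖ := by
    have : z - x (k + 1) = (z - w) - (Dk k) w := by rw [hiter k]; rw [hw, hs, hxk]; abel
    rw [this]
    exact norm_sub_le _ _
  have hDZ : D * ‖z‖ ≤ C * N := by
    have h1 : D * ‖z‖ ≤ C * r k * ‖z‖ := mul_le_mul_of_nonneg_right hDk (le_of_lt hZ)
    have h2 : C * r k * ‖z‖ = C * N := by
      rw [hr k]; field_simp; rfl
    linarith
  -- main bound in norm form
  have main : ‖z - x (k + 1)‖ ≤
      (1 / 2) * L * K * (1 + D) * N * N + E * K * M * (1 + D) * N + C * N := by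
    have h1 : D * ‖w‖ ≤ D * (‖z‖ + ‖z - w‖) := mul_le_mul_of_nonneg_left hwb hD0
    have h2 : D * ‖z - w‖ ≤ D * (K * (L / 2 * (N * N)) + E * (K * (M * N))) :=
      mul_le_mul_of_nonneg_left hzw hD0
    nlinarith [hx1, hDkw, hzw, hDZ]
  -- convert to relative errors
  rw [hr (k + 1), hr k]
  have e1 : ‖z‖ * (N / ‖z‖) = N := by field_simp
  have e2 : N / ‖z‖ * ‖z‖ = N := by field_simp
  rw [div_le_iff₀ hZ, mul_assoc ((1:ℝ)/2 * L * K * (1 + D)) ‖z‖ (N / ‖z‖), e1,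
    mul_assoc _ (N / ‖z‖) ‖z‖, e2]
  nlinarith [main]
end

section
/- Let F : ℝⁿ → ℝⁿ be continuously differentiable, let z ≠ 0 be a zero of F, and suppose ‖F'(x)⁻¹‖ ≤ K, ‖F'(x) − F'(y)‖ ≤ L‖x − y‖, ‖F'(x)‖ ≤ M for all x, y. Consider the quasi-Newton iteration with exact subtraction x_{k+1} = g(x_k) − E_k F'(x_k)⁻¹F(x_k), and set r_k = ‖z − x_k‖/‖z‖. Then r_{k+1} ≤ η_k r_k with η_k = (1/2)LK‖z‖ r_k + ‖E_k‖KM. Moreover, if E = sup_k ‖E_k‖ and η = (1/2)LK‖z‖ r_0 + EKM < 1, then r_k ≤ η^k r_0 for all k, and x_k → z. -/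
open Filter intervalIntegral

lemma taylor_quad_s13 {n : ℕ}
    (F : EuclideanSpace ℝ (Fin n) → EuclideanSpace ℝ (Fin n))
    (F' : EuclideanSpace ℝ (Fin n) →
      (EuclideanSpace ℝ (Fin n) →L[ℝ] EuclideanSpace ℝ (Fin n)))
    (hF : ∀ u, HasFDerivAt F (F' u) u) (hF'c : Continuous F')
    (L : ℝ) (hL : 0 ≤ L) (hLip : ∀ u v, ‖F' u - F' v‖ ≤ L * ‖u - v‖)
    (x z : EuclideanSpace ℝ (Fin n)) :
    ‖F z - F x - F' x (z - x)‖ ≤ L / 2 * ‖z - x‖ ^ 2 := by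
  set v := z - x with hv
  have hpath : Continuous fun t : ℝ => x + t • v := continuous_const.add (continuous_id.smul continuous_const)
  have hG : ∀ t : ℝ, HasDerivAt (fun t : ℝ => F (x + t • v)) (F' (x + t • v) v) t := by
    intro t
    have h1 : HasDerivAt (fun t : ℝ => x + t • v) v t := by
      simpa using ((hasDerivAt_id t).smul_const v).const_add x
    exact (hF (x + t • v)).comp_hasDerivAt t h1
  have hcont : Continuous fun t : ℝ => F' (x + t • v) v :=
    (ContinuousLinearMap.apply ℝ (EuclideanSpace ℝ (Fin n)) v).continuous.comp
      (hF'c.comp hpath)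
  have hint : IntervalIntegrable (fun t : ℝ => F' (x + t • v) v) MeasureTheory.volume 0 1 :=
    hcont.intervalIntegrable _ _
  have key : (∫ t in (0:ℝ)..1, F' (x + t • v) v) = F z - F x := by
    rw [intervalIntegral.integral_eq_sub_of_hasDerivAt (fun t _ => hG t) hint]
    simp [hv]
  have hsub : F z - F x - F' x v = ∫ t in (0:ℝ)..1, (F' (x + t • v) v - F' x v) := by
    rw [intervalIntegral.integral_sub hint ((continuous_const).intervalIntegrable _ _)]
    simp [key]
  rw [hsub]
  have hbound : ∀ t ∈ Set.uIoc (0:ℝ) 1,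
      ‖F' (x + t • v) v - F' x v‖ ≤ L * ‖v‖ ^ 2 * t := by
    intro t ht
    rw [Set.uIoc_of_le (by norm_num : (0:ℝ) ≤ 1)] at ht
    have ht0 : 0 ≤ t := le_of_lt ht.1
    have h1 : ‖F' (x + t • v) v - F' x v‖ ≤ ‖F' (x + t • v) - F' x‖ * ‖v‖ := by
      calc ‖F' (x + t • v) v - F' x v‖ = ‖(F' (x + t • v) - F' x) v‖ := by simp
        _ ≤ ‖F' (x + t • v) - F' x‖ * ‖v‖ := ContinuousLinearMap.le_opNorm _ _
    have h2 : ‖F' (x + t • v) - F' x‖ ≤ L * (t * ‖v‖) := by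
      have h := hLip (x + t • v) x
      rw [add_sub_cancel_left, norm_smul, Real.norm_eq_abs, abs_of_nonneg ht0] at h
      exact h
    calc ‖F' (x + t • v) v - F' x v‖ ≤ (L * (t * ‖v‖)) * ‖v‖ :=
          h1.trans (mul_le_mul_of_nonneg_right h2 (norm_nonneg v))
      _ = L * ‖v‖ ^ 2 * t := by ring
  have hnorm := intervalIntegral.norm_integral_le_abs_of_norm_le
    (g := fun t => L * ‖v‖ ^ 2 * t)
    ((MeasureTheory.ae_restrict_iff' measurableSet_uIoc).mpr (MeasureTheory.ae_of_all _ hbound))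
    (((continuous_const.mul continuous_id).intervalIntegrable (μ := MeasureTheory.volume) _ _))
  have hval : |∫ t in (0:ℝ)..1, L * ‖v‖ ^ 2 * t| = L / 2 * ‖v‖ ^ 2 := by
    rw [intervalIntegral.integral_const_mul, integral_id]
    rw [abs_of_nonneg (by positivity)]; ring
  calc ‖∫ t in (0:ℝ)..1, (F' (x + t • v) v - F' x v)‖
      ≤ |∫ t in (0:ℝ)..1, L * ‖v‖ ^ 2 * t| := hnorm
    _ = L / 2 * ‖v‖ ^ 2 := hval

/-- **Section 3.3 (linear convergence).** Under the uniform bounds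
`‖F'(x)⁻¹‖ ≤ K`, `‖F'(x) − F'(y)‖ ≤ L‖x − y‖`, `‖F'(x)‖ ≤ M`, a nonzero zero
`z` of `F`, and the quasi-Newton iteration with exact subtraction
`x_{k+1} = g(x_k) − E_k F'(x_k)⁻¹F(x_k)`: with `r_k = ‖z − x_k‖/‖z‖` one has
`r_{k+1} ≤ η_k r_k` where `η_k = (1/2)LK‖z‖ r_k + ‖E_k‖KM`; moreover, if
`E = sup_k ‖E_k‖` and `η = (1/2)LK‖z‖ r_0 + EKM < 1`, then `r_k ≤ η^k r_0`
for all `k` and `x_k → z`. -/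
theorem quasi_newton_linear_convergence {n : ℕ}
    (F : EuclideanSpace ℝ (Fin n) → EuclideanSpace ℝ (Fin n))
    (F' F'inv : EuclideanSpace ℝ (Fin n) →
      (EuclideanSpace ℝ (Fin n) →L[ℝ] EuclideanSpace ℝ (Fin n)))
    (hF : ∀ u, HasFDerivAt F (F' u) u)
    (hF'c : Continuous F')
    (hinv : ∀ u,
      (F' u).comp (F'inv u) = ContinuousLinearMap.id ℝ (EuclideanSpace ℝ (Fin n)) ∧
      (F'inv u).comp (F' u) = ContinuousLinearMap.id ℝ (EuclideanSpace ℝ (Fin n)))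
    (K L M : ℝ)
    (hK : ∀ u, ‖F'inv u‖ ≤ K)
    (hLip : ∀ u v, ‖F' u - F' v‖ ≤ L * ‖u - v‖)
    (hM : ∀ u, ‖F' u‖ ≤ M)
    (z : EuclideanSpace ℝ (Fin n)) (hz : F z = 0) (hz0 : z ≠ 0)
    (x : ℕ → EuclideanSpace ℝ (Fin n))
    (Ek : ℕ → (EuclideanSpace ℝ (Fin n) →L[ℝ] EuclideanSpace ℝ (Fin n)))
    (hiter : ∀ k, x (k + 1) =
      (x k - (F'inv (x k)) (F (x k))) - (Ek k) ((F'inv (x k)) (F (x k))))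
    (r : ℕ → ℝ) (hr : ∀ j, r j = ‖z - x j‖ / ‖z‖)
    (E : ℝ) (hE : IsLUB (Set.range fun k => ‖Ek k‖) E) :
    (∀ k, r (k + 1) ≤ ((1 / 2) * L * K * ‖z‖ * r k + ‖Ek k‖ * K * M) * r k) ∧
    ((1 / 2) * L * K * ‖z‖ * r 0 + E * K * M < 1 →
      (∀ k, r k ≤ ((1 / 2) * L * K * ‖z‖ * r 0 + E * K * M) ^ k * r 0) ∧
      Tendsto x atTop (nhds z)) := by
  have hzpos : 0 < ‖z‖ := norm_pos_iff.mpr hz0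
  have hK0 : 0 ≤ K := (norm_nonneg _).trans (hK z)
  have hM0 : 0 ≤ M := (norm_nonneg _).trans (hM z)
  have hL0 : 0 ≤ L := by
    have h := (norm_nonneg (F' z - F' 0)).trans (hLip z 0)
    rw [sub_zero] at h
    nlinarith
  have hE0 : 0 ≤ E := (norm_nonneg (Ek 0)).trans (hE.1 ⟨0, rfl⟩)
  have hr0 : ∀ j, 0 ≤ r j := fun j => (hr j) ▸ div_nonneg (norm_nonneg _) (norm_nonneg _)
  have hzx : ∀ j, ‖z - x j‖ = r j * ‖z‖ := by
    intro j; rw [hr j, div_mul_cancel₀ _ (ne_of_gt hzpos)]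
  -- ‖F u‖ ≤ M * ‖z - u‖
  have hFM : ∀ u, ‖F u‖ ≤ M * ‖z - u‖ := by
    intro u
    have := convex_univ.norm_image_sub_le_of_norm_hasFDerivWithin_le
      (f := F) (f' := F') (fun w _ => (hF w).hasFDerivWithinAt)
      (fun w _ => hM w) (Set.mem_univ z) (Set.mem_univ u)
    simpa [hz, norm_sub_rev] using this
  -- key step bound
  have hstep : ∀ k, ‖z - x (k + 1)‖ ≤
      ((1 / 2) * L * K * ‖z‖ * r k + ‖Ek k‖ * K * M) * ‖z - x k‖ := by
    intro k
    set u := x k with hu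
    set w := (F'inv u) (F u) with hw
    have hx1 : z - x (k + 1) = (z - u + w) + (Ek k) w := by
      rw [hiter k]; abel
    have hterm1 : z - u + w = (F'inv u) (F u - F z - (F' u) (u - z)) := by
      have h2 := (hinv u).2
      have : (F'inv u) ((F' u) (u - z)) = u - z := by
        rw [← ContinuousLinearMap.comp_apply, h2]; rfl
      rw [map_sub, map_sub, this, hz, map_zero]
      abel
    have hT : ‖F u - F z - (F' u) (u - z)‖ ≤ L / 2 * ‖z - u‖ ^ 2 := by
      have := taylor_quad_s13 F F' hF hF'c L hL0 hLip u z
      have heq : F u - F z - (F' u) (u - z) = -(F z - F u - (F' u) (z - u)) := by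
        rw [show u - z = -(z - u) by abel, map_neg]; abel
      rw [heq, norm_neg]
      exact this
    have h1 : ‖z - u + w‖ ≤ K * (L / 2 * ‖z - u‖ ^ 2) := by
      rw [hterm1]
      calc ‖(F'inv u) (F u - F z - (F' u) (u - z))‖
          ≤ ‖F'inv u‖ * ‖F u - F z - (F' u) (u - z)‖ := ContinuousLinearMap.le_opNorm _ _
        _ ≤ K * (L / 2 * ‖z - u‖ ^ 2) :=
            mul_le_mul (hK u) hT (norm_nonneg _) hK0
    have h2 : ‖(Ek k) w‖ ≤ ‖Ek k‖ * (K * (M * ‖z - u‖)) := by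
      calc ‖(Ek k) w‖ ≤ ‖Ek k‖ * ‖w‖ := ContinuousLinearMap.le_opNorm _ _
        _ ≤ ‖Ek k‖ * (K * (M * ‖z - u‖)) := by
            apply mul_le_mul_of_nonneg_left _ (norm_nonneg _)
            calc ‖w‖ ≤ ‖F'inv u‖ * ‖F u‖ := ContinuousLinearMap.le_opNorm _ _
              _ ≤ K * (M * ‖z - u‖) := by
                  apply mul_le_mul (hK u) _ (norm_nonneg _) hK0
                  simpa using hFM u
    calc ‖z - x (k + 1)‖ ≤ ‖z - u + w‖ + ‖(Ek k) w‖ := by rw [hx1]; exact norm_add_le _ _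
      _ ≤ K * (L / 2 * ‖z - u‖ ^ 2) + ‖Ek k‖ * (K * (M * ‖z - u‖)) := add_le_add h1 h2
      _ = ((1 / 2) * L * K * ‖z - u‖ + ‖Ek k‖ * K * M) * ‖z - u‖ := by ring
      _ = ((1 / 2) * L * K * ‖z‖ * r k + ‖Ek k‖ * K * M) * ‖z - x k‖ := by
          rw [← hu, hzx k]; ring
  have part1 : ∀ k, r (k + 1) ≤ ((1 / 2) * L * K * ‖z‖ * r k + ‖Ek k‖ * K * M) * r k := by
    intro k
    have h := hstep k
    rw [hzx k, hzx (k + 1)] at h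
    have := (mul_le_mul_iff_of_pos_right hzpos).mp (by linarith [h] :
      r (k + 1) * ‖z‖ ≤ (((1 / 2) * L * K * ‖z‖ * r k + ‖Ek k‖ * K * M) * r k) * ‖z‖)
    exact this
  refine ⟨part1, fun hη => ?_⟩
  set η := (1 / 2) * L * K * ‖z‖ * r 0 + E * K * M with hηdef
  have hc0 : 0 ≤ (1 / 2) * L * K * ‖z‖ :=
    mul_nonneg (mul_nonneg (mul_nonneg (by norm_num) hL0) hK0) (norm_nonneg z)
  have hη0 : 0 ≤ η :=
    add_nonneg (mul_nonneg hc0 (hr0 0)) (mul_nonneg (mul_nonneg hE0 hK0) hM0)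
  have hbnd : ∀ k, r k ≤ η ^ k * r 0 := by
    intro k
    induction k with
    | zero => simp
    | succ k ih =>
      have hrk0 : r k ≤ r 0 := by
        calc r k ≤ η ^ k * r 0 := ih
          _ ≤ 1 * r 0 := mul_le_mul_of_nonneg_right
              (pow_le_one₀ hη0 (le_of_lt hη)) (hr0 0)
          _ = r 0 := one_mul _
      have hEk : ‖Ek k‖ ≤ E := hE.1 ⟨k, rfl⟩
      have hηk : (1 / 2) * L * K * ‖z‖ * r k + ‖Ek k‖ * K * M ≤ η := by
        apply add_le_add
        · apply mul_le_mul_of_nonneg_left hrk0 hc0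
        · apply mul_le_mul_of_nonneg_right (mul_le_mul_of_nonneg_right hEk hK0) hM0
      calc r (k + 1) ≤ ((1 / 2) * L * K * ‖z‖ * r k + ‖Ek k‖ * K * M) * r k := part1 k
        _ ≤ η * r k := mul_le_mul_of_nonneg_right hηk (hr0 k)
        _ ≤ η * (η ^ k * r 0) := mul_le_mul_of_nonneg_left ih hη0
        _ = η ^ (k + 1) * r 0 := by ring
  refine ⟨hbnd, ?_⟩
  rw [tendsto_iff_norm_sub_tendsto_zero]
  apply squeeze_zero (fun k => norm_nonneg _) (g := fun k => η ^ k * (r 0 * ‖z‖))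
  · intro k
    calc ‖x k - z‖ = r k * ‖z‖ := by rw [← hzx k, norm_sub_rev]
      _ ≤ (η ^ k * r 0) * ‖z‖ := mul_le_mul_of_nonneg_right (hbnd k) (norm_nonneg _)
      _ = η ^ k * (r 0 * ‖z‖) := by ring
  · have := tendsto_pow_atTop_nhds_zero_of_lt_one hη0 hη
    simpa using this.mul_const (r 0 * ‖z‖)
end

section
/- For every α ∈ [1,4], the linear function x₀(α) = α/3 + 17/24 approximates the square root with relative error at most 1/24: |x₀(α) − √α|/√α ≤ 1/24. -/
/-- **Section 4.1 (initial guess).** For every `α ∈ [1,4]` the linear function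
`x₀(α) = α/3 + 17/24` approximates `√α` with relative error at most `1/24`:
`|x₀(α) − √α|/√α ≤ 1/24`. -/
theorem sqrt_initial_guess_relative_error :
    ∀ α ∈ Set.Icc (1 : ℝ) 4,
      |α / 3 + 17 / 24 - Real.sqrt α| / Real.sqrt α ≤ 1 / 24 := by
  rintro α ⟨h1, h4⟩
  set s := Real.sqrt α with hs
  have hs1 : 1 ≤ s := by
    rw [hs, show (1:ℝ) = Real.sqrt 1 by simp]
    exact Real.sqrt_le_sqrt h1
  have hs2 : s ≤ 2 := by
    rw [hs, show (2:ℝ) = Real.sqrt 4 by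
      rw [show (4:ℝ) = 2^2 by norm_num, Real.sqrt_sq]; norm_num]
    exact Real.sqrt_le_sqrt h4
  have hsq : s ^ 2 = α := Real.sq_sqrt (by linarith)
  rw [div_le_div_iff₀ (by linarith) (by norm_num)]
  rcases abs_cases (α / 3 + 17 / 24 - s) with ⟨h, _⟩ | ⟨h, _⟩ <;> rw [h] <;> nlinarith [sq_nonneg (s - 1), sq_nonneg (8*s - 17), sq_nonneg (s - 2)]
end
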